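/- W ⊆ 𝓢 is dependent in φ (i.e., not independent) if and only if there exists a trace α with α models φ′_W ∧ φ′_{𝓢∖W} ∧ ¬φ. -/
import Mathlib


open Classical

/-- Syntax of LTL formulae over variable type `V`. -/
inductive LTL (V : Type) : Type
  | tt : LTL V
  | var : V → LTL V
  | neg : LTL V → LTL V
  | conj : LTL V → LTL V → LTL V
  | next : LTL V → LTL V
  | untl : LTL V → LTL V → LTL V

namespace LTL

def rename {V : Type} (f : V → V) : LTL V → LTL V
  | tt => tt
  | var v => var (f v)
  | neg φ => neg (rename f φ)
  | conj φ ψ => conj (rename f φ) (rename f ψ)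
  | next φ => next (rename f φ)
  | untl φ ψ => untl (rename f φ) (rename f ψ)

def vars {V : Type} : LTL V → Set V
  | tt => ∅
  | var v => {v}
  | neg φ => vars φ
  | conj φ ψ => vars φ ∪ vars ψ
  | next φ => vars φ
  | untl φ ψ => vars φ ∪ vars ψ

/-- The "always" operator, defined from until. -/
def box {V : Type} (φ : LTL V) : LTL V := neg (untl tt (neg φ))

end LTL

/-- An (infinite) trace: each state is a set of variables (those true there). -/
abbrev Trace (V : Type) := ℕ → Set V

def Trace.shift {V : Type} (α : Trace V) (k : ℕ) : Trace V := fun i => α (i + k)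

/-- Standard LTL satisfaction. -/
def Sat {V : Type} (α : Trace V) : LTL V → Prop
  | .tt => True
  | .var v => v ∈ α 0
  | .neg φ => ¬ Sat α φ
  | .conj φ ψ => Sat α φ ∧ Sat α ψ
  | .next φ => Sat (α.shift 1) φ
  | .untl φ ψ => ∃ k, Sat (α.shift k) ψ ∧ ∀ j < k, Sat (α.shift j) φ

/-- The projection formula `φ′_W`: rename every variable in `W` to its primed copy. -/
noncomputable def projFormula {V : Type} (prime : V → V) (W : Set V) (φ : LTL V) : LTL V :=
  φ.rename (fun v => if v ∈ W then prime v else v)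

/-- Projection of a trace over `E ∪ W`: keep environment variables and variables in `W`. -/
def projT {V : Type} (E W : Set V) (α : Trace V) : Trace V :=
  fun i => (α i ∩ E) ∪ (α i ∩ W)

/-- Projection of a set of traces. -/
def projS {V : Type} (E W : Set V) (Sig : Set (Trace V)) : Set (Trace V) :=
  (projT E W) '' Sig

/-- Natural join of two sets of traces over `E ∪ W₁` and `E ∪ W₂`:
traces over `E ∪ W₁ ∪ W₂` whose projections lie in the respective sets. -/
def Join {V : Type} (E W₁ W₂ : Set V) (S₁ S₂ : Set (Trace V)) : Set (Trace V) :=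
  {α | (∀ i, α i ⊆ E ∪ W₁ ∪ W₂) ∧ projT E W₁ α ∈ S₁ ∧ projT E W₂ α ∈ S₂}

/-- A set of traces is "over `E ∪ W`" if every state of every trace only uses those variables. -/
def TracesOver {V : Type} (E W : Set V) (Sig : Set (Trace V)) : Prop :=
  ∀ α ∈ Sig, ∀ i, α i ⊆ E ∪ W

/-- `Σ_φ`: the set of traces over `E ∪ S` that model `φ`. -/
def ModelsOver {V : Type} (E S : Set V) (φ : LTL V) : Set (Trace V) :=
  {α | Sat α φ ∧ ∀ i, α i ⊆ E ∪ S}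

/-- `W ⊆ S` is independent in `φ`:  `(Σ_φ ↾ W) ⋈ (Σ_φ ↾ (S \ W)) = Σ_φ`. -/
def Indep {V : Type} (E S : Set V) (φ : LTL V) (W : Set V) : Prop :=
  Join E W (S \ W) (projS E W (ModelsOver E S φ)) (projS E (S \ W) (ModelsOver E S φ))
    = ModelsOver E S φ

/-- A literal: a variable together with a polarity. -/
def LTL.lit {V : Type} (p : V × Bool) : LTL V :=
  if p.2 then LTL.var p.1 else LTL.neg (LTL.var p.1)

/-- Conjunction of a list of formulae. -/
def LTL.bigConj {V : Type} (l : List (LTL V)) : LTL V :=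
  l.foldr LTL.conj LTL.tt

lemma sat_rename {V : Type} (f : V → V) (φ : LTL V) :
    ∀ τ : Trace V, Sat τ (φ.rename f) ↔ Sat (fun i => f ⁻¹' (τ i)) φ := by
  induction φ with
  | tt => intro τ; exact Iff.rfl
  | var v => intro τ; exact Iff.rfl
  | neg φ ih => intro τ; simp only [LTL.rename, Sat]; rw [ih]
  | conj φ ψ ih1 ih2 => intro τ; simp only [LTL.rename, Sat]; rw [ih1, ih2]
  | next φ ih => intro τ; simp only [LTL.rename, Sat]; exact ih (τ.shift 1)
  | untl φ ψ ih1 ih2 =>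
      intro τ; simp only [LTL.rename, Sat]
      constructor
      · rintro ⟨k, h1, h2⟩
        exact ⟨k, (ih2 (τ.shift k)).1 h1, fun j hj => (ih1 (τ.shift j)).1 (h2 j hj)⟩
      · rintro ⟨k, h1, h2⟩
        exact ⟨k, (ih2 (τ.shift k)).2 h1, fun j hj => (ih1 (τ.shift j)).2 (h2 j hj)⟩

lemma sat_congr {V : Type} (φ : LTL V) :
    ∀ (α α' : Trace V), (∀ i : ℕ, ∀ v ∈ φ.vars, (v ∈ α i ↔ v ∈ α' i)) →
      (Sat α φ ↔ Sat α' φ) := by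
  induction φ with
  | tt => intro _ _ _; exact Iff.rfl
  | var v => intro α α' h; exact h 0 v rfl
  | neg φ ih => intro α α' h; simp only [Sat]; rw [ih α α' h]
  | conj φ ψ ih1 ih2 =>
      intro α α' h
      simp only [Sat]
      rw [ih1 α α' (fun i v hv => h i v (Set.mem_union_left _ hv)),
          ih2 α α' (fun i v hv => h i v (Set.mem_union_right _ hv))]
  | next φ ih =>
      intro α α' h
      simp only [Sat]
      exact ih _ _ (fun i v hv => h (i + 1) v hv)
  | untl φ ψ ih1 ih2 =>
      intro α α' h
      simp only [Sat]
      constructor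
      · rintro ⟨k, h1, h2⟩
        exact ⟨k, (ih2 _ _ (fun i v hv => h (i + k) v (Set.mem_union_right _ hv))).1 h1,
          fun j hj => (ih1 _ _ (fun i v hv => h (i + j) v (Set.mem_union_left _ hv))).1 (h2 j hj)⟩
      · rintro ⟨k, h1, h2⟩
        exact ⟨k, (ih2 _ _ (fun i v hv => h (i + k) v (Set.mem_union_right _ hv))).2 h1,
          fun j hj => (ih1 _ _ (fun i v hv => h (i + j) v (Set.mem_union_left _ hv))).2 (h2 j hj)⟩

lemma mem_projT {V : Type} (E X : Set V) (δ : Trace V) (i : ℕ) (v : V) :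
    v ∈ projT E X δ i ↔ v ∈ δ i ∧ (v ∈ E ∨ v ∈ X) := by
  simp only [projT, Set.mem_union, Set.mem_inter_iff]
  tauto

lemma projT_agree {V : Type} {E X : Set V} {δ δ' : Trace V}
    (h : projT E X δ = projT E X δ') {i : ℕ} {v : V} (hv : v ∈ E ∨ v ∈ X) :
    v ∈ δ i ↔ v ∈ δ' i := by
  have := congrFun h i
  constructor
  · intro hm
    exact ((mem_projT E X δ' i v).1 (this ▸ (mem_projT E X δ i v).2 ⟨hm, hv⟩)).1
  · intro hm
    exact ((mem_projT E X δ i v).1 (this ▸ (mem_projT E X δ' i v).2 ⟨hm, hv⟩)).1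

/-- `W` is dependent in `φ` iff some trace models
`φ′_W ∧ φ′_{S∖W} ∧ ¬φ`. -/
theorem stmt14 {V : Type} (En Sy : Set V) (hdis : Disjoint En Sy)
    (prime : V → V) (hinj : Function.Injective prime)
    (hfresh : ∀ v, prime v ∉ En ∪ Sy)
    (φ : LTL V) (hvars : φ.vars ⊆ En ∪ Sy)
    (W : Set V) (hW : W ⊆ Sy) :
    ¬ Indep En Sy φ W ↔
      ∃ α : Trace V,
        Sat α (((projFormula prime W φ).conj
          (projFormula prime (Sy \ W) φ)).conj (LTL.neg φ)) := by
  classical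
  set M := ModelsOver En Sy φ with hM
  have hWS : W ∪ (Sy \ W) = Sy := Set.union_diff_cancel hW
  have hU : En ∪ W ∪ (Sy \ W) = En ∪ Sy := by rw [Set.union_assoc, hWS]
  -- fresh variables facts
  have hfresh1 : ∀ v w : V, v ∈ En ∪ Sy → v ≠ prime w := by
    rintro v w hv rfl; exact hfresh w hv
  have hnW : ∀ v : V, v ∈ En ∪ Sy → v ∉ W → v ∈ En ∨ v ∈ Sy \ W := by
    intro v hv hvW
    rcases hv with hv | hv
    · exact Or.inl hv
    · exact Or.inr ⟨hv, hvW⟩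
  have hnSW : ∀ v : V, v ∈ En ∪ Sy → v ∉ Sy \ W → v ∈ En ∨ v ∈ W := by
    intro v hv hvW
    rcases hv with hv | hv
    · exact Or.inl hv
    · exact Or.inr (by by_contra hc; exact hvW ⟨hv, hc⟩)
  have hEnW : ∀ v : V, v ∈ En ∨ v ∈ Sy \ W → v ∉ W := by
    rintro v (hv | hv) hvW
    · exact (hdis.ne_of_mem hv (hW hvW)) rfl
    · exact hv.2 hvW
  have hEnSW : ∀ v : V, v ∈ En ∨ v ∈ W → v ∉ Sy \ W := by
    rintro v (hv | hv) hvW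
    · exact (hdis.ne_of_mem hv hvW.1) rfl
    · exact hvW.2 hv
  have hsub : M ⊆ Join En W (Sy \ W) (projS En W M) (projS En (Sy \ W) M) := by
    intro α hα
    exact ⟨fun i => by rw [hU]; exact hα.2 i, ⟨α, hα, rfl⟩, ⟨α, hα, rfl⟩⟩
  constructor
  · -- dependent → witness trace
    intro hnI
    have : ∃ α, α ∈ Join En W (Sy \ W) (projS En W M) (projS En (Sy \ W) M) ∧ α ∉ M := by
      by_contra hc
      push_neg at hc
      exact hnI (le_antisymm hc hsub)
    obtain ⟨α, ⟨hbnd, ⟨β, hβM, hβp⟩, ⟨γ, hγM, hγp⟩⟩, hnM⟩ := this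
    have hbnd' : ∀ i, α i ⊆ En ∪ Sy := fun i => by rw [← hU]; exact hbnd i
    have hnSat : ¬ Sat α φ := fun hs => hnM ⟨hs, hbnd'⟩
    -- the combined trace
    set τ : Trace V := fun i =>
      α i ∪ prime '' (γ i ∩ W) ∪ prime '' (β i ∩ (Sy \ W)) with hτ
    have hτmem : ∀ i v, v ∈ En ∪ Sy → (v ∈ τ i ↔ v ∈ α i) := by
      intro i v hv
      simp only [hτ, Set.mem_union]
      constructor
      · rintro ((h | ⟨w, _, rfl⟩) | ⟨w, _, rfl⟩)
        · exact h
        · exact absurd rfl (hfresh1 _ w hv)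
        · exact absurd rfl (hfresh1 _ w hv)
      · exact fun h => Or.inl (Or.inl h)
    have hτprime : ∀ i v, (prime v ∈ τ i ↔ (v ∈ γ i ∧ v ∈ W) ∨ (v ∈ β i ∧ v ∈ Sy \ W)) := by
      intro i v
      simp only [hτ, Set.mem_union]
      constructor
      · rintro ((h | ⟨w, hw, hww⟩) | ⟨w, hw, hww⟩)
        · exact absurd rfl (hfresh1 _ v (hbnd' i h)).symm
        · obtain rfl := hinj hww; exact Or.inl hw
        · obtain rfl := hinj hww; exact Or.inr hw
      · rintro (h | h)
        · exact Or.inl (Or.inr ⟨v, h, rfl⟩)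
        · exact Or.inr ⟨v, h, rfl⟩
    refine ⟨τ, ?_⟩
    show (Sat τ (projFormula prime W φ) ∧ Sat τ (projFormula prime (Sy \ W) φ)) ∧ ¬ Sat τ φ
    refine ⟨⟨?_, ?_⟩, ?_⟩
    · -- τ satisfies φ′_W  (via γ)
      rw [projFormula, sat_rename]
      refine (sat_congr φ _ γ ?_).2 hγM.1
      intro i v hv
      have hv' : v ∈ En ∪ Sy := hvars hv
      simp only [Set.mem_preimage]
      by_cases hvW : v ∈ W
      · rw [if_pos hvW, hτprime]
        constructor
        · rintro (⟨h, _⟩ | ⟨_, h⟩)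
          · exact h
          · exact absurd hvW h.2
        · exact fun h => Or.inl ⟨h, hvW⟩
      · rw [if_neg hvW, hτmem i v hv']
        exact (projT_agree hγp (hnW v hv' hvW)).symm
    · -- τ satisfies φ′_{Sy\W}  (via β)
      rw [projFormula, sat_rename]
      refine (sat_congr φ _ β ?_).2 hβM.1
      intro i v hv
      have hv' : v ∈ En ∪ Sy := hvars hv
      simp only [Set.mem_preimage]
      by_cases hvW : v ∈ Sy \ W
      · rw [if_pos hvW, hτprime]
        constructor
        · rintro (⟨_, h⟩ | ⟨h, _⟩)
          · exact absurd h hvW.2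
          · exact h
        · exact fun h => Or.inr ⟨h, hvW⟩
      · rw [if_neg hvW, hτmem i v hv']
        exact (projT_agree hβp (hnSW v hv' hvW)).symm
    · -- τ satisfies ¬φ
      show ¬ Sat τ φ
      intro hs
      exact hnSat ((sat_congr φ τ α (fun i v hv => hτmem i v (hvars hv))).1 hs)
  · -- witness trace → dependent
    rintro ⟨τ, hτs⟩
    have hτs' : (Sat τ (projFormula prime W φ) ∧ Sat τ (projFormula prime (Sy \ W) φ)) ∧ ¬ Sat τ φ := hτs
    obtain ⟨⟨h1, h2⟩, h3⟩ := hτs'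
    intro hI
    set α : Trace V := fun i => τ i ∩ (En ∪ Sy) with hα
    set γ : Trace V := fun i =>
      (En ∪ Sy) ∩ ((fun v => @ite V (v ∈ W) (Classical.propDecidable _) (prime v) v) ⁻¹' (τ i)) with hγ
    set β : Trace V := fun i =>
      (En ∪ Sy) ∩ ((fun v => @ite V (v ∈ Sy \ W) (Classical.propDecidable _) (prime v) v) ⁻¹' (τ i)) with hβ
    have hγM : γ ∈ M := by
      refine ⟨?_, fun i => Set.inter_subset_left⟩
      rw [projFormula, sat_rename] at h1
      refine (sat_congr φ _ γ ?_).1 h1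
      intro i v hv
      simp only [hγ, Set.mem_inter_iff, Set.mem_preimage]
      exact ⟨fun h => ⟨hvars hv, h⟩, fun h => h.2⟩
    have hβM : β ∈ M := by
      refine ⟨?_, fun i => Set.inter_subset_left⟩
      rw [projFormula, sat_rename] at h2
      refine (sat_congr φ _ β ?_).1 h2
      intro i v hv
      simp only [hβ, Set.mem_inter_iff, Set.mem_preimage]
      exact ⟨fun h => ⟨hvars hv, h⟩, fun h => h.2⟩
    have hγp : projT En (Sy \ W) γ = projT En (Sy \ W) α := by
      funext i
      ext v
      rw [mem_projT, mem_projT]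
      constructor
      · rintro ⟨hm, hc⟩
        refine ⟨⟨?_, hm.1⟩, hc⟩
        have := hm.2
        rwa [Set.mem_preimage, if_neg (hEnW v hc)] at this
      · rintro ⟨hm, hc⟩
        refine ⟨⟨hm.2, ?_⟩, hc⟩
        rw [Set.mem_preimage, if_neg (hEnW v hc)]
        exact hm.1
    have hβp : projT En W β = projT En W α := by
      funext i
      ext v
      rw [mem_projT, mem_projT]
      constructor
      · rintro ⟨hm, hc⟩
        refine ⟨⟨?_, hm.1⟩, hc⟩
        have := hm.2
        rwa [Set.mem_preimage, if_neg (hEnSW v hc)] at this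
      · rintro ⟨hm, hc⟩
        refine ⟨⟨hm.2, ?_⟩, hc⟩
        rw [Set.mem_preimage, if_neg (hEnSW v hc)]
        exact hm.1
    have hαJ : α ∈ Join En W (Sy \ W) (projS En W M) (projS En (Sy \ W) M) := by
      refine ⟨fun i => by rw [hU]; exact Set.inter_subset_right, ⟨β, hβM, hβp⟩, ⟨γ, hγM, hγp⟩⟩
    rw [hI] at hαJ
    refine h3 ?_
    refine (sat_congr φ α τ ?_).1 hαJ.1
    intro i v hv
    simp only [hα, Set.mem_inter_iff]
    exact ⟨fun h => h.1, fun h => ⟨h, hvars hv⟩⟩
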